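/- (The truncated HOSVD as a ⋆_M expression.) Let A be an m×p×n real tensor, let Q : Matrix (Fin m) (Fin m) ℝ, W : Matrix (Fin p) (Fin p) ℝ and Z : Matrix (Fin n) (Fin n) ℝ be orthogonal matrices, let k₁ ≤ m, k₂ ≤ p, k₃ ≤ n, and write Q₁, W₁, Z₁ for the submatrices consisting of the first k₁, k₂, k₃ columns of Q, W, Z respectively. Define the truncated HOSVD approximation A_𝐤 := A ×₁ (Q₁ * Q₁ᵀ) ×₂ (W₁ * W₁ᵀ) ×₃ (Z₁ * Z₁ᵀ). Set M := Zᵀ (so M⁻¹ = Z). Let Q̃ be the m×k₁×n tensor with (Q̃ ×₃ M) i = Q₁ for all i, let W̃ be the p×k₂×n tensor with (W̃ ×₃ M) i = W₁ for all i, and let P be the p×p×n tensor with (P ×₃ M) i equal to the identity matrix for i < k₃ and the zero matrix otherwise. Let C := Q̃ᵀ ⋆_M A ⋆_M W̃. Then A_𝐤 = Q̃ ⋆_M C ⋆_M W̃ᵀ ⋆_M P. -/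

import Mathlib

open scoped BigOperators ComplexConjugate Matrix

noncomputable section

variable {R : Type*}

/-- Mode-3 product of a third-order tensor (encoded by its frontal slices)
with a transform matrix: `(A ×₃ M) i = ∑ j, (M i j) • (A j)`. -/
def mode3 [RCLike R] {ι α β : Type*} [Fintype ι]
    (A : ι → Matrix α β R) (M : Matrix ι ι R) : ι → Matrix α β R :=
  fun i => ∑ j, M i j • A j

/-- Frobenius (entrywise ℓ²) norm of a matrix. -/
def fnorm [RCLike R] {α β : Type*} [Fintype α] [Fintype β] (A : Matrix α β R) : ℝ :=
  Real.sqrt (∑ a, ∑ b, ‖A a b‖ ^ 2)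

/-- Frobenius norm of a tensor: `‖A‖² = ∑ i, ‖A i‖²`. -/
def tnorm [RCLike R] {ι α β : Type*} [Fintype ι] [Fintype α] [Fintype β]
    (A : ι → Matrix α β R) : ℝ :=
  Real.sqrt (∑ i, fnorm (A i) ^ 2)

/-- The ⋆_M product: facewise product in the transform domain, then inverse transform. -/
def tprodM [RCLike R] {ι m p q : Type*} [Fintype ι] [DecidableEq ι] [Fintype p]
    (M : Matrix ι ι R) (A : ι → Matrix m p R) (B : ι → Matrix p q R) :
    ι → Matrix m q R :=
  mode3 (fun i => mode3 A M i * mode3 B M i) M⁻¹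

/-- Conjugate transpose of a tensor under ⋆_M. -/
def tconj [RCLike R] {ι m p : Type*} [Fintype ι] [DecidableEq ι]
    (M : Matrix ι ι R) (A : ι → Matrix m p R) : ι → Matrix p m R :=
  mode3 (fun i => (mode3 A M i)ᴴ) M⁻¹

/-- The identity tensor under ⋆_M. -/
def tId [RCLike R] (m : Type*) [DecidableEq m] {ι : Type*} [Fintype ι] [DecidableEq ι]
    (M : Matrix ι ι R) : ι → Matrix m m R :=
  mode3 (fun _ => (1 : Matrix m m R)) M⁻¹

/-- A square tensor `Q` is ⋆_M-unitary if `Qᴴ ⋆_M Q = Q ⋆_M Qᴴ = I`. -/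
def tUnitary [RCLike R] {ι m : Type*} [Fintype ι] [DecidableEq ι] [Fintype m] [DecidableEq m]
    (M : Matrix ι ι R) (Q : ι → Matrix m m R) : Prop :=
  tprodM M (tconj M Q) Q = tId m M ∧ tprodM M Q (tconj M Q) = tId m M

/-- A t-SVDM of `A`: a factorization `A = U ⋆_M S ⋆_M Vᴴ` with `U`, `V` ⋆_M-unitary and every
transform-domain slice `Ŝ i` diagonal with real, nonnegative, nonincreasing diagonal entries. -/
def IsTSVDM [RCLike R] {m p n : ℕ} (M : Matrix (Fin n) (Fin n) R)
    (A : Fin n → Matrix (Fin m) (Fin p) R)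
    (U : Fin n → Matrix (Fin m) (Fin m) R)
    (S : Fin n → Matrix (Fin m) (Fin p) R)
    (V : Fin n → Matrix (Fin p) (Fin p) R) : Prop :=
  A = tprodM M (tprodM M U S) (tconj M V) ∧
  tUnitary M U ∧ tUnitary M V ∧
  (∀ (i : Fin n) (a : Fin m) (b : Fin p), (a : ℕ) ≠ (b : ℕ) → mode3 S M i a b = 0) ∧
  (∀ (i : Fin n) (a : Fin m) (b : Fin p), (a : ℕ) = (b : ℕ) →
      ∃ r : ℝ, 0 ≤ r ∧ mode3 S M i a b = (r : R)) ∧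
  (∀ (i : Fin n) (a a' : Fin m) (b b' : Fin p), (a : ℕ) = (b : ℕ) → (a' : ℕ) = (b' : ℕ) →
      (a : ℕ) ≤ (a' : ℕ) →
      RCLike.re (mode3 S M i a' b') ≤ RCLike.re (mode3 S M i a b))

/-- Transform-domain slice of a truncation:
(first k columns of Û) * (leading k×k block of Ŝ) * (first k columns of V̂)ᴴ. -/
def truncSlice [RCLike R] {m p : ℕ} (k : ℕ) (Uh : Matrix (Fin m) (Fin m) R)
    (Sh : Matrix (Fin m) (Fin p) R) (Vh : Matrix (Fin p) (Fin p) R) :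
    Matrix (Fin m) (Fin p) R :=
  Matrix.of fun a b =>
    ∑ j : Fin m, ∑ l : Fin p,
      if (j : ℕ) < k ∧ (l : ℕ) < k then Uh a j * Sh j l * star (Vh b l) else 0

/-- The multi-rank-ρ truncation of a t-SVDM (use `ρ = fun _ => k` for the t-rank-k truncation). -/
def truncTensor [RCLike R] {m p n : ℕ} (M : Matrix (Fin n) (Fin n) R)
    (U : Fin n → Matrix (Fin m) (Fin m) R) (S : Fin n → Matrix (Fin m) (Fin p) R)
    (V : Fin n → Matrix (Fin p) (Fin p) R) (ρ : Fin n → ℕ) :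
    Fin n → Matrix (Fin m) (Fin p) R :=
  mode3 (fun i => truncSlice (ρ i) (mode3 U M i) (mode3 S M i) (mode3 V M i)) M⁻¹

/-- The permuted tensor `Aᴾ`: `(Aᴾ c) i j = (A i) c j`. -/
def tperm [RCLike R] {m p n : ℕ} (A : Fin n → Matrix (Fin m) (Fin p) R) :
    Fin m → Matrix (Fin n) (Fin p) R :=
  fun c => Matrix.of fun i j => A i c j

/-!
In the transform domain of `M = Zᵀ` the tensors `Q̃` and `W̃` have the constant slices `Q₁` and
`W₁`, and `P` is the mask keeping the first `k₃` slices, so the right-hand side has slices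
`Q₁ Q₁ᵀ Âᵢ W₁ W₁ᵀ` for `i < k₃` and `0` otherwise, mapped back by `M⁻¹ = Z`. On the left,
`Z₁ Z₁ᵀ = Z D Zᵀ` with `D` the diagonal `0/1` mask, so the mode-3 projection is the same mask
applied in the transform domain.
-/

theorem Fin.sum_castLE_eq_sum_ite {k n : ℕ} (h : k ≤ n) {β : Type*} [AddCommMonoid β]
    (f : Fin n → β) :
    ∑ j : Fin k, f (Fin.castLE h j) = ∑ j : Fin n, if (j : ℕ) < k then f j else 0 := by
  rw [← Finset.sum_filter]
  change ∑ j, f (Fin.castLEEmb h j) = _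
  rw [← Finset.sum_map Finset.univ (Fin.castLEEmb h) f]
  congr 1
  ext j
  simp only [Finset.mem_map, Finset.mem_univ, true_and, Finset.mem_filter, Fin.castLEEmb_apply]
  exact ⟨fun ⟨i, hi⟩ => hi ▸ i.isLt, fun hj => ⟨⟨j, hj⟩, rfl⟩⟩

theorem Matrix.submatrix_castLE_mul_transpose {S α : Type*} [CommSemiring S] {k n : ℕ}
    (h : k ≤ n) (Z : Matrix α (Fin n) S) :
    Z.submatrix id (Fin.castLE h) * (Z.submatrix id (Fin.castLE h))ᵀ
      = Z * Matrix.diagonal (fun j : Fin n => if (j : ℕ) < k then (1 : S) else 0) * Zᵀ := by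
  ext a b
  rw [Matrix.mul_apply, Matrix.mul_apply]
  exact (Fin.sum_castLE_eq_sum_ite h (fun j => Z a j * Z b j)).trans <|
    Finset.sum_congr rfl fun j _ => by
      split_ifs <;> simp [Matrix.mul_diagonal, *]

section Mode3

variable [RCLike R] {ι α β γ δ : Type*} [Fintype ι]

theorem mode3_mode3 (X : ι → Matrix α β R) (M N : Matrix ι ι R) :
    mode3 (mode3 X M) N = mode3 X (N * M) := by
  funext i
  simp only [mode3, Matrix.mul_apply, Finset.smul_sum, Finset.sum_smul, smul_smul]
  exact Finset.sum_comm

theorem mode3_diagonal [DecidableEq ι] (X : ι → Matrix α β R) (d : ι → R) :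
    mode3 X (Matrix.diagonal d) = fun i => d i • X i := by
  funext i
  simp [mode3, Matrix.diagonal_apply, ite_smul]

theorem mode3_one [DecidableEq ι] (X : ι → Matrix α β R) : mode3 X 1 = X := by
  simpa using mode3_diagonal X 1

theorem mode3_mul_mul [Fintype α] [Fintype β] (F : Matrix γ α R) (X : ι → Matrix α β R)
    (G : Matrix β δ R) (M : Matrix ι ι R) :
    mode3 (fun i => F * X i * G) M = fun i => F * mode3 X M i * G := by
  funext i
  simp [mode3, Matrix.mul_sum, Matrix.sum_mul]

variable [DecidableEq ι] {M : Matrix ι ι R}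

theorem mode3_mode3_inv (hM : IsUnit M.det) (X : ι → Matrix α β R) :
    mode3 (mode3 X M⁻¹) M = X := by
  rw [mode3_mode3, Matrix.mul_nonsing_inv M hM, mode3_one]

theorem mode3_tprodM [Fintype β] (hM : IsUnit M.det) (X : ι → Matrix α β R)
    (Y : ι → Matrix β γ R) : mode3 (tprodM M X Y) M = fun i => mode3 X M i * mode3 Y M i :=
  mode3_mode3_inv hM _

theorem mode3_tconj (hM : IsUnit M.det) (X : ι → Matrix α β R) :
    mode3 (tconj M X) M = fun i => (mode3 X M i)ᴴ :=
  mode3_mode3_inv hM _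

end Mode3

theorem stmt12_general {m p n : ℕ} (A : Fin n → Matrix (Fin m) (Fin p) ℝ)
    (Q : Matrix (Fin m) (Fin m) ℝ)
    (Wm : Matrix (Fin p) (Fin p) ℝ)
    (Z : Matrix (Fin n) (Fin n) ℝ) (hZ : Z ∈ Matrix.orthogonalGroup (Fin n) ℝ)
    (k₁ k₂ k₃ : ℕ) (h₁ : k₁ ≤ m) (h₂ : k₂ ≤ p) (h₃ : k₃ ≤ n) :
    let Q₁ := Q.submatrix id (Fin.castLE h₁)
    let W₁ := Wm.submatrix id (Fin.castLE h₂)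
    let Z₁ := Z.submatrix id (Fin.castLE h₃)
    let M := Zᵀ
    -- the truncated HOSVD approximation  A ×₁ (Q₁Q₁ᵀ) ×₂ (W₁W₁ᵀ) ×₃ (Z₁Z₁ᵀ)
    let Ak : Fin n → Matrix (Fin m) (Fin p) ℝ :=
      fun i => Q₁ * Q₁ᵀ * mode3 A (Z₁ * Z₁ᵀ) i * (W₁ * W₁ᵀ)ᵀ
    let Qt := mode3 (fun _ : Fin n => Q₁) M⁻¹
    let Wt := mode3 (fun _ : Fin n => W₁) M⁻¹
    let P := mode3
      (fun i : Fin n => if (i : ℕ) < k₃ then (1 : Matrix (Fin p) (Fin p) ℝ) else 0) M⁻¹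
    let C := tprodM M (tprodM M (tconj M Qt) A) Wt
    Ak = tprodM M (tprodM M (tprodM M Qt C) (tconj M Wt)) P := by
  intro Q₁ W₁ Z₁ M Ak Qt Wt P C
  have hMZ : M * Z = 1 := (Matrix.mem_orthogonalGroup_iff' _ _).mp hZ
  have hM : IsUnit M.det := Matrix.isUnit_det_of_right_inverse hMZ
  have hMinv : M⁻¹ = Z := Matrix.inv_eq_right_inv hMZ
  set d : Fin n → ℝ := fun i => if (i : ℕ) < k₃ then 1 else 0
  have hAk : Ak = mode3 (fun i => d i • (Q₁ * Q₁ᵀ * mode3 A M i * (W₁ * W₁ᵀ)ᵀ)) Z := by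
    calc Ak = mode3 (fun i => Q₁ * Q₁ᵀ * A i * (W₁ * W₁ᵀ)ᵀ) (Z * Matrix.diagonal d * M) := by
          rw [mode3_mul_mul, ← Matrix.submatrix_castLE_mul_transpose]
      _ = _ := by rw [← mode3_mode3, ← mode3_mode3, mode3_diagonal, mode3_mul_mul]
  have hRHS : tprodM M (tprodM M (tprodM M Qt C) (tconj M Wt)) P
      = mode3 (fun i => Q₁ * (Q₁ᵀ * mode3 A M i * W₁) * W₁ᵀ * mode3 P M i) Z := by
    change mode3 _ M⁻¹ = _
    simp only [C, Qt, Wt, mode3_tprodM hM, mode3_tconj hM, mode3_mode3_inv hM,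
      Matrix.conjTranspose_eq_transpose_of_trivial]
    rw [hMinv]
  rw [hAk, hRHS, mode3_mode3_inv hM]
  congr 1
  funext i
  by_cases hi : (i : ℕ) < k₃ <;> simp [d, hi, Matrix.mul_assoc]

/-- the truncated HOSVD as a ⋆_M expression: with `M := Zᵀ`,
`A_𝐤 = Q̃ ⋆_M C ⋆_M W̃ᵀ ⋆_M P` where `C = Q̃ᵀ ⋆_M A ⋆_M W̃`. -/
theorem stmt12 {m p n : ℕ} (A : Fin n → Matrix (Fin m) (Fin p) ℝ)
    (Q : Matrix (Fin m) (Fin m) ℝ) (hQ : Q ∈ Matrix.orthogonalGroup (Fin m) ℝ)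
    (Wm : Matrix (Fin p) (Fin p) ℝ) (hWm : Wm ∈ Matrix.orthogonalGroup (Fin p) ℝ)
    (Z : Matrix (Fin n) (Fin n) ℝ) (hZ : Z ∈ Matrix.orthogonalGroup (Fin n) ℝ)
    (k₁ k₂ k₃ : ℕ) (h₁ : k₁ ≤ m) (h₂ : k₂ ≤ p) (h₃ : k₃ ≤ n) :
    let Q₁ := Q.submatrix id (Fin.castLE h₁)
    let W₁ := Wm.submatrix id (Fin.castLE h₂)
    let Z₁ := Z.submatrix id (Fin.castLE h₃)
    let M := Zᵀ
    -- the truncated HOSVD approximation  A ×₁ (Q₁Q₁ᵀ) ×₂ (W₁W₁ᵀ) ×₃ (Z₁Z₁ᵀ)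
    let Ak : Fin n → Matrix (Fin m) (Fin p) ℝ :=
      fun i => Q₁ * Q₁ᵀ * mode3 A (Z₁ * Z₁ᵀ) i * (W₁ * W₁ᵀ)ᵀ
    let Qt := mode3 (fun _ : Fin n => Q₁) M⁻¹
    let Wt := mode3 (fun _ : Fin n => W₁) M⁻¹
    let P := mode3
      (fun i : Fin n => if (i : ℕ) < k₃ then (1 : Matrix (Fin p) (Fin p) ℝ) else 0) M⁻¹
    let C := tprodM M (tprodM M (tconj M Qt) A) Wt
    Ak = tprodM M (tprodM M (tprodM M Qt C) (tconj M Wt)) P :=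
  stmt12_general A Q Wm Z hZ k₁ k₂ k₃ h₁ h₂ h₃
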